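/- arXiv:0908.2587 — 5 statements merged into one kernel-verified Lean document; each statement's English description precedes it below -/
import Mathlib

section
/- (Lemma 3.13.) For every f ∈ B₁ one has |c₁(f)| ≤ 2/e, and equality holds only for the rotations of κ₀, i.e., only when f(z) = e^{iα₁} κ₀(e^{iα} z) for some real α, α₁. -/
/-- The `n`-th Taylor coefficient of `f` at `0`. -/
noncomputable def taylorCoeff (f : ℂ → ℂ) (n : ℕ) : ℂ :=
  iteratedDeriv n f 0 / n.factorial

/-- The universal covering map `κ₀(z) = exp((z-1)/(z+1))` of `Δ` onto `Δ*`. -/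
noncomputable def kappa0 (z : ℂ) : ℂ :=
  Complex.exp ((z - 1) / (z + 1))

open Metric Set Complex ComplexConjugate Topology

/-!
Write `f = exp ∘ g` with `g` holomorphic on the disc; `|f| < 1` puts `g` in the left half-plane.
Composing `g` with the Möbius map of the left half-plane onto the disc that sends `a = g 0` to `0`,
the Schwarz lemma gives `|g'(0)| ≤ 2 x` with `x = -Re a`, hence
`|c₁(f)| = e^{-x} |g'(0)| ≤ 2 x e^{-x} ≤ 2/e`. Equality forces `x = 1` and equality in the Schwarz
lemma, so the Möbius image of `g` is a rotation, and solving for `g` gives a rotation of `κ₀`.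
-/

theorem Complex.exists_differentiableOn_eqOn_exp_comp_ball {f : ℂ → ℂ} {c : ℂ} {r : ℝ}
    (hf : DifferentiableOn ℂ f (ball c r)) (hne : ∀ z ∈ ball c r, f z ≠ 0) :
    ∃ g : ℂ → ℂ, DifferentiableOn ℂ g (ball c r) ∧ EqOn f (exp ∘ g) (ball c r) := by
  obtain ⟨g, hgc, hg⟩ :=
    ((hf.deriv isOpen_ball).div hf hne).isExactOn_ball.with_val_at c (log (f c))
  have hgd : DifferentiableOn ℂ g (ball c r) := fun z hz =>
    (hg z hz).differentiableAt.differentiableWithinAt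
  set q : ℂ → ℂ := fun w => f w * exp (-g w)
  -- `g' = f' / f` makes `q' = 0`, and `q c = 1` because `g c = log (f c)`.
  have hq : ∀ z ∈ ball c r, HasDerivAt q 0 z := fun z hz => by
    have hfz := (hf.differentiableAt (isOpen_ball.mem_nhds hz)).hasDerivAt
    refine (hfz.mul (hg z hz).neg.cexp).congr_deriv ?_
    simp only [Pi.div_apply]
    field_simp [hne z hz]
    ring
  refine ⟨g, hgd, fun z hz => ?_⟩
  have hc : c ∈ ball c r := mem_ball_self (pos_of_mem_ball hz)
  have hqz : q z = q c :=
    isOpen_ball.is_const_of_deriv_eq_zero (convex_ball c r).isPreconnected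
      (fun w hw => (hq w hw).differentiableAt.differentiableWithinAt)
      (fun w hw => (hq w hw).deriv) hz hc
  simp only [q, hgc, exp_neg, exp_log (hne c hc)] at hqz
  field_simp [hne c hc] at hqz
  simpa [eq_comm] using hqz

/-- The Möbius map of the left half-plane onto the unit disc sending `a` to `0`. -/
noncomputable def leftHalfPlaneCayley (a w : ℂ) : ℂ :=
  (w - a) / (w + conj a)

section LeftHalfPlaneCayley

variable {a w : ℂ}

lemma add_conj_ne_zero_of_re_neg (hw : w.re < 0) (ha : a.re < 0) : w + conj a ≠ 0 := by
  intro h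
  have := congrArg re h
  simp only [add_re, conj_re, zero_re] at this
  linarith

lemma norm_sub_lt_norm_add_conj (hw : w.re < 0) (ha : a.re < 0) : ‖w - a‖ < ‖w + conj a‖ := by
  rw [norm_def, norm_def]
  refine Real.sqrt_lt_sqrt (normSq_nonneg _) ?_
  simp only [normSq_apply, sub_re, sub_im, add_re, add_im, conj_re, conj_im]
  nlinarith

lemma norm_leftHalfPlaneCayley_lt_one (hw : w.re < 0) (ha : a.re < 0) :
    ‖leftHalfPlaneCayley a w‖ < 1 := by
  rw [leftHalfPlaneCayley, norm_div,
    div_lt_one (norm_pos_iff.2 (add_conj_ne_zero_of_re_neg hw ha))]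
  exact norm_sub_lt_norm_add_conj hw ha

lemma norm_two_mul_re_of_re_neg (ha : a.re < 0) : ‖2 * (a.re : ℂ)‖ = -2 * a.re := by
  rw [norm_mul, norm_real, Real.norm_eq_abs, abs_of_neg ha]
  norm_num

lemma leftHalfPlaneCayley_self : leftHalfPlaneCayley a a = 0 := by
  simp [leftHalfPlaneCayley]

lemma hasDerivAt_leftHalfPlaneCayley_self (ha : a.re < 0) :
    HasDerivAt (leftHalfPlaneCayley a) (1 / (2 * a.re)) a := by
  have hden := add_conj_ne_zero_of_re_neg ha ha
  have h2 : a + conj a = 2 * a.re := by rw [add_conj]; push_cast; ring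
  refine (((hasDerivAt_id a).sub_const a).div ((hasDerivAt_id a).add_const (conj a))
    hden).congr_deriv ?_
  rw [← h2]
  simp only [id, sub_self, zero_mul, sub_zero, one_mul]
  field_simp

end LeftHalfPlaneCayley

lemma one_sub_mul_ne_zero_of_norm_eq_one {d z : ℂ} (hd : ‖d‖ = 1) (hz : z ∈ ball (0 : ℂ) 1) :
    1 - d * z ≠ 0 := by
  refine sub_ne_zero.2 fun h => (mem_ball_zero_iff.1 hz).ne ?_
  simpa [hd] using congrArg norm h.symm

section LeftHalfPlane

variable {g : ℂ → ℂ}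

lemma mapsTo_leftHalfPlaneCayley_comp (hre : ∀ z ∈ ball (0 : ℂ) 1, (g z).re < 0) :
    MapsTo (leftHalfPlaneCayley (g 0) ∘ g) (ball 0 1) (closedBall 0 1) := fun z hz =>
  mem_closedBall_zero_iff.2
    (norm_leftHalfPlaneCayley_lt_one (hre z hz) (hre 0 (mem_ball_self one_pos))).le

lemma hasDerivAt_leftHalfPlaneCayley_comp (hg : DifferentiableOn ℂ g (ball 0 1))
    (hre : ∀ z ∈ ball (0 : ℂ) 1, (g z).re < 0) :
    HasDerivAt (leftHalfPlaneCayley (g 0) ∘ g) (deriv g 0 / (2 * (g 0).re)) 0 := by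
  have h0 : (0 : ℂ) ∈ ball 0 1 := mem_ball_self one_pos
  refine ((hasDerivAt_leftHalfPlaneCayley_self (hre 0 h0)).comp 0
    (hg.differentiableAt (isOpen_ball.mem_nhds h0)).hasDerivAt).congr_deriv ?_
  ring

lemma differentiableOn_leftHalfPlaneCayley_comp (hg : DifferentiableOn ℂ g (ball 0 1))
    (hre : ∀ z ∈ ball (0 : ℂ) 1, (g z).re < 0) :
    DifferentiableOn ℂ (leftHalfPlaneCayley (g 0) ∘ g) (ball 0 1) :=
  (hg.sub_const _).div (hg.add_const _) fun z hz =>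
    add_conj_ne_zero_of_re_neg (hre z hz) (hre 0 (mem_ball_self one_pos))

theorem norm_deriv_le_of_re_neg (hg : DifferentiableOn ℂ g (ball 0 1))
    (hre : ∀ z ∈ ball (0 : ℂ) 1, (g z).re < 0) :
    ‖deriv g 0‖ ≤ -2 * (g 0).re := by
  have hre0 := hre 0 (mem_ball_self one_pos)
  have h := norm_deriv_le_one_of_mapsTo_ball (differentiableOn_leftHalfPlaneCayley_comp hg hre)
    (by simpa [leftHalfPlaneCayley_self] using mapsTo_leftHalfPlaneCayley_comp hre) one_pos
  rwa [(hasDerivAt_leftHalfPlaneCayley_comp hg hre).deriv, norm_div,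
    norm_two_mul_re_of_re_neg hre0, div_le_one (by linarith)] at h

theorem exists_eq_div_of_norm_deriv_eq (hg : DifferentiableOn ℂ g (ball 0 1))
    (hre : ∀ z ∈ ball (0 : ℂ) 1, (g z).re < 0) (heq : ‖deriv g 0‖ = -2 * (g 0).re) :
    ∃ d : ℂ, ‖d‖ = 1 ∧
      ∀ z ∈ ball (0 : ℂ) 1, g z = (g 0 + d * z * conj (g 0)) / (1 - d * z) := by
  have hre0 := hre 0 (mem_ball_self one_pos)
  set d := deriv g 0 / (2 * (g 0).re)
  have hd : ‖d‖ = 1 := by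
    rw [norm_div, heq, norm_two_mul_re_of_re_neg hre0, div_self (by linarith)]
  have haffine := affine_of_mapsTo_ball_of_norm_dslope_eq_div
    (differentiableOn_leftHalfPlaneCayley_comp hg hre)
    (by simpa [leftHalfPlaneCayley_self] using mapsTo_leftHalfPlaneCayley_comp hre)
    (mem_ball_self one_pos)
    (by rw [dslope_same, (hasDerivAt_leftHalfPlaneCayley_comp hg hre).deriv, hd, div_one])
  refine ⟨d, hd, fun z hz' => ?_⟩
  have hz := haffine hz'
  simp only [Function.comp_apply, leftHalfPlaneCayley_self, dslope_same,
    (hasDerivAt_leftHalfPlaneCayley_comp hg hre).deriv, sub_zero, zero_add, smul_eq_mul] at hz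
  change (g z - g 0) / (g z + conj (g 0)) = z * d at hz
  rw [div_eq_iff (add_conj_ne_zero_of_re_neg (hre z hz') hre0)] at hz
  rw [eq_div_iff (one_sub_mul_ne_zero_of_norm_eq_one hd hz')]
  linear_combination hz

lemma Real.neg_mul_exp_lt_exp_neg_one {r : ℝ} (hr : r ≠ -1) :
    -r * Real.exp r < Real.exp (-1) := by
  have h : -r < Real.exp (-r - 1) := by
    simpa using Real.add_one_lt_exp (x := -r - 1) (by contrapose! hr; linarith)
  calc -r * Real.exp r < Real.exp (-r - 1) * Real.exp r := by gcongr
    _ = Real.exp (-1) := by rw [← Real.exp_add]; ring_nf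

lemma Real.mul_exp_le_two_div_exp_one {s r : ℝ} (hs : s ≤ -2 * r) :
    s * Real.exp r ≤ 2 / Real.exp 1 := by
  calc s * Real.exp r ≤ 2 * (-r * Real.exp (-(-r))) := by
        rw [neg_neg]; nlinarith [Real.exp_pos r]
    _ ≤ 2 * Real.exp (-1) := by gcongr; exact Real.mul_exp_neg_le_exp_neg_one _
    _ = 2 / Real.exp 1 := by rw [Real.exp_neg, div_eq_mul_inv]

lemma Real.eq_neg_one_of_mul_exp_eq_two_div_exp_one {s r : ℝ} (hs : s ≤ -2 * r)
    (h : s * Real.exp r = 2 / Real.exp 1) : s = -2 * r ∧ r = -1 := by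
  have hr : r = -1 := by
    by_contra hr
    have hlt := Real.neg_mul_exp_lt_exp_neg_one hr
    have hle : s * Real.exp r ≤ 2 * (-r * Real.exp r) := by nlinarith [Real.exp_pos r]
    rw [h, div_eq_mul_inv] at hle
    rw [Real.exp_neg] at hlt
    linarith
  subst hr
  rw [Real.exp_neg, ← div_eq_mul_inv, div_left_inj' (Real.exp_pos 1).ne'] at h
  exact ⟨by linarith, rfl⟩

lemma exp_div_eq_exp_mul_kappa0 {a d z : ℂ} (ha : a.re = -1) (hdz : 1 - d * z ≠ 0) :
    exp ((a + d * z * conj a) / (1 - d * z)) = exp (I * a.im) * kappa0 (-d * z) := by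
  obtain ⟨t, rfl⟩ : ∃ t : ℝ, a = -1 + t * I := ⟨a.im, by simpa [ha] using (re_add_im a).symm⟩
  rw [kappa0, ← exp_add, show -d * z + 1 = 1 - d * z by ring]
  congr 1
  simp only [map_add, map_mul, map_neg, map_one, conj_ofReal, conj_I, add_im, neg_im, one_im,
    mul_im, ofReal_re, ofReal_im, I_re, I_im]
  field_simp
  norm_num
  ring

lemma taylorCoeff_one (f : ℂ → ℂ) : taylorCoeff f 1 = deriv f 0 := by
  simp [taylorCoeff]

/-- Lemma 3.13: for every `f ∈ B₁`, `|c₁(f)| ≤ 2/e`, with equality only for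
the rotations `e^{iα₁} κ₀(e^{iα} z)` of `κ₀`. -/
theorem lemma_3_13
    (f : ℂ → ℂ)
    (hf : DifferentiableOn ℂ f (Metric.ball (0 : ℂ) 1))
    (hmem : ∀ z ∈ Metric.ball (0 : ℂ) 1, f z ≠ 0 ∧ ‖f z‖ < 1) :
    ‖taylorCoeff f 1‖ ≤ 2 / Real.exp 1 ∧
      (‖taylorCoeff f 1‖ = 2 / Real.exp 1 →
        ∃ α α₁ : ℝ, ∀ z ∈ Metric.ball (0 : ℂ) 1,
          f z = Complex.exp (Complex.I * (α₁ : ℂ)) *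
            kappa0 (Complex.exp (Complex.I * (α : ℂ)) * z)) := by
  obtain ⟨g, hg, hfg⟩ := exists_differentiableOn_eqOn_exp_comp_ball hf fun z hz => (hmem z hz).1
  have hre : ∀ z ∈ ball (0 : ℂ) 1, (g z).re < 0 := fun z hz => by
    simpa [hfg hz, norm_exp] using (hmem z hz).2
  have hc1 : ‖taylorCoeff f 1‖ = ‖deriv g 0‖ * Real.exp (g 0).re := by
    have h0 : ball (0 : ℂ) 1 ∈ 𝓝 0 := ball_mem_nhds 0 one_pos
    have hderiv := ((hg.differentiableAt h0).hasDerivAt.cexp).congr_of_eventuallyEq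
      (Filter.eventually_of_mem h0 hfg)
    rw [taylorCoeff_one, hderiv.deriv, norm_mul, norm_exp, mul_comm]
  have hle := norm_deriv_le_of_re_neg hg hre
  refine ⟨hc1 ▸ Real.mul_exp_le_two_div_exp_one hle, fun heq => ?_⟩
  obtain ⟨hs, hr⟩ := Real.eq_neg_one_of_mul_exp_eq_two_div_exp_one hle (hc1 ▸ heq)
  obtain ⟨d, hd, hgd⟩ := exists_eq_div_of_norm_deriv_eq hg hre hs
  refine ⟨arg (-d), (g 0).im, fun z hz => ?_⟩
  have hrot : exp (I * arg (-d)) = -d := by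
    simpa [norm_neg, hd, mul_comm] using norm_mul_exp_arg_mul_I (-d)
  rw [hfg hz, Function.comp_apply, hgd z hz,
    exp_div_eq_exp_mul_kappa0 hr (one_sub_mul_ne_zero_of_norm_eq_one hd hz), hrot]
end LeftHalfPlane
end

section
/- (Lemma 3.10.) Let f be a bounded holomorphic function on Δ and define f_t(z) = f(t·z) for t, z ∈ Δ. Then the map χ_f : t ↦ f_t is a holomorphic map from Δ into the Banach space H^∞: for each t₀ ∈ Δ the function z ↦ z·f′(t₀·z) is bounded and holomorphic on Δ, and there exist δ > 0 and C > 0 such that sup_{z∈Δ} |f(t·z) − f(t₀·z) − (t − t₀)·z·f′(t₀·z)| ≤ C·|t − t₀|² whenever |t − t₀| < δ and t ∈ Δ. -/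
/-!
A holomorphic function is `C²` near the compact disk `‖w‖ ≤ r`, `r = (1 + ‖t₀‖)/2`, which contains
every `t z` with `z ∈ Δ` and `‖t - t₀‖ ≤ (1 - ‖t₀‖)/2`. So `f'` is bounded and `L`-Lipschitz there,
and the mean value theorem applied to `w ↦ f w - w f'(t₀ z)` bounds the first-order Taylor
remainder of `f` between `t₀ z` and `t z` by `L ‖(t - t₀) z‖² ≤ L ‖t - t₀‖²`, uniformly in `z ∈ Δ`.
-/

open Metric
open scoped NNReal

theorem Convex.norm_image_sub_sub_smul_le_of_lipschitzOnWith {𝕜 E : Type*} [RCLike 𝕜]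
    [NormedAddCommGroup E] [NormedSpace 𝕜 E] {f f' : 𝕜 → E} {s : Set 𝕜} {K : ℝ≥0}
    (hs : Convex ℝ s) (hf : ∀ x ∈ s, HasDerivWithinAt f (f' x) s x)
    (hf' : LipschitzOnWith K f' s) {a b : 𝕜} (ha : a ∈ s) (hb : b ∈ s) :
    ‖f b - f a - (b - a) • f' a‖ ≤ K * ‖b - a‖ ^ 2 := by
  set g : 𝕜 → E := fun w => f w - w • f' a
  have hseg : segment ℝ a b ⊆ s := hs.segment_subset ha hb
  have hg : ∀ w ∈ segment ℝ a b, HasDerivWithinAt g (f' w - f' a) (segment ℝ a b) w :=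
    fun w hw => ((hf w (hseg hw)).mono hseg).sub
      (by simpa using (hasDerivWithinAt_id w _).smul_const (f' a))
  have hbound : ∀ w ∈ segment ℝ a b, ‖f' w - f' a‖ ≤ K * ‖b - a‖ := fun w hw =>
    calc ‖f' w - f' a‖ ≤ K * ‖w - a‖ := by
          simpa [dist_eq_norm] using hf'.dist_le_mul w (hseg hw) a ha
      _ ≤ K * ‖b - a‖ := by
          gcongr
          simpa [dist_eq_norm, norm_sub_rev] using segment_subset_closedBall_left a b hw
  calc ‖f b - f a - (b - a) • f' a‖ = ‖g b - g a‖ := by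
        simp only [g, sub_smul]; abel_nf
    _ ≤ K * ‖b - a‖ * ‖b - a‖ := (convex_segment a b).norm_image_sub_le_of_norm_hasDerivWithin_le
        hg hbound (left_mem_segment ℝ a b) (right_mem_segment ℝ a b)
    _ = K * ‖b - a‖ ^ 2 := by ring

theorem exists_lipschitzOnWith_deriv_of_differentiableOn {E : Type*} [NormedAddCommGroup E]
    [NormedSpace ℂ E] [CompleteSpace E] {f : ℂ → E} {U K : Set ℂ} (hf : DifferentiableOn ℂ f U)
    (hU : IsOpen U) (hK : IsCompact K) (hKc : Convex ℝ K) (hKU : K ⊆ U) :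
    ∃ L, LipschitzOnWith L (deriv f) K :=
  ((((hf.deriv hU).contDiffOn (n := 1) hU).restrict_scalars ℝ).mono hKU).exists_lipschitzOnWith
    one_ne_zero hKc hK

theorem mul_mem_closedBall_zero {R : Type*} [SeminormedRing R] {t z : R} {r : ℝ}
    (ht : ‖t‖ ≤ r) (hz : ‖z‖ ≤ 1) : t * z ∈ closedBall 0 r :=
  mem_closedBall_zero_iff.2 <| (norm_mul_le t z).trans <|
    (mul_le_of_le_one_right (norm_nonneg t) hz).trans ht

theorem lemma_3_10_general
    (f : ℂ → ℂ)
    (hf : DifferentiableOn ℂ f (Metric.ball (0 : ℂ) 1))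
    (t₀ : ℂ) (ht₀ : t₀ ∈ Metric.ball (0 : ℂ) 1) :
    DifferentiableOn ℂ (fun z => z * deriv f (t₀ * z)) (Metric.ball (0 : ℂ) 1) ∧
    (∃ M' : ℝ, ∀ z ∈ Metric.ball (0 : ℂ) 1,
      ‖z * deriv f (t₀ * z)‖ ≤ M') ∧
    ∃ δ > (0 : ℝ), ∃ C > (0 : ℝ), ∀ t ∈ Metric.ball (0 : ℂ) 1,
      ‖t - t₀‖ < δ →
      ∀ z ∈ Metric.ball (0 : ℂ) 1,
        ‖f (t * z) - f (t₀ * z) - (t - t₀) * z * deriv f (t₀ * z)‖ ≤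
          C * ‖t - t₀‖ ^ 2 := by
  replace ht₀ : ‖t₀‖ < 1 := mem_ball_zero_iff.1 ht₀
  set r := (1 + ‖t₀‖) / 2 with hr
  have hrU : closedBall (0 : ℂ) r ⊆ ball 0 1 := closedBall_subset_ball (by linarith [hr])
  have hmem : ∀ {t : ℂ}, ‖t‖ ≤ r → ∀ z ∈ ball (0 : ℂ) 1, t * z ∈ closedBall 0 r :=
    fun ht z hz => mul_mem_closedBall_zero ht (mem_ball_zero_iff.1 hz).le
  have ht₀r : ‖t₀‖ ≤ r := by linarith [hr]
  obtain ⟨L, hL⟩ := exists_lipschitzOnWith_deriv_of_differentiableOn hf isOpen_ball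
    (isCompact_closedBall 0 r) (convex_closedBall 0 r) hrU
  obtain ⟨B, hB⟩ := (isCompact_closedBall (0 : ℂ) r).exists_bound_of_continuousOn hL.continuousOn
  refine ⟨differentiableOn_id.mul ((hf.deriv isOpen_ball).comp (differentiableOn_id.const_mul t₀)
      fun z hz => hrU (hmem ht₀r z hz)), ⟨B, fun z hz => ?_⟩,
    (1 - ‖t₀‖) / 2, by linarith, L + 1, by positivity, fun t _ ht z hz => ?_⟩
  · calc ‖z * deriv f (t₀ * z)‖ ≤ 1 * B := by
          rw [norm_mul]
          exact mul_le_mul (mem_ball_zero_iff.1 hz).le (hB _ (hmem ht₀r z hz))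
            (norm_nonneg _) zero_le_one
      _ = B := one_mul B
  · have htr : ‖t‖ ≤ r := by linarith [norm_le_insert' t t₀, hr]
    have hderiv : ∀ w ∈ closedBall (0 : ℂ) r,
        HasDerivWithinAt f (deriv f w) (closedBall 0 r) w := fun w hw =>
      (hf.differentiableAt (isOpen_ball.mem_nhds (hrU hw))).hasDerivAt.hasDerivWithinAt
    have hdist : ‖t * z - t₀ * z‖ ≤ ‖t - t₀‖ := by
      rw [← sub_mul]
      exact mem_closedBall_zero_iff.1 (mul_mem_closedBall_zero le_rfl (mem_ball_zero_iff.1 hz).le)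
    calc ‖f (t * z) - f (t₀ * z) - (t - t₀) * z * deriv f (t₀ * z)‖
        = ‖f (t * z) - f (t₀ * z) - (t * z - t₀ * z) • deriv f (t₀ * z)‖ := by
          rw [smul_eq_mul, sub_mul]
      _ ≤ L * ‖t * z - t₀ * z‖ ^ 2 :=
          (convex_closedBall 0 r).norm_image_sub_sub_smul_le_of_lipschitzOnWith hderiv hL
            (hmem ht₀r z hz) (hmem htr z hz)
      _ ≤ (L + 1) * ‖t - t₀‖ ^ 2 := by gcongr; linarith

/-- Lemma 3.10: for a bounded holomorphic `f` on `Δ`, the homotopy map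
`χ_f : t ↦ f_t`, `f_t(z) = f(t·z)`, is a holomorphic map `Δ → H^∞`: its
derivative at `t₀` is the bounded holomorphic function `z ↦ z·f′(t₀·z)`, with
a quadratic sup-norm error bound. -/
theorem lemma_3_10
    (f : ℂ → ℂ) (M : ℝ)
    (hf : DifferentiableOn ℂ f (Metric.ball (0 : ℂ) 1))
    (hb : ∀ z ∈ Metric.ball (0 : ℂ) 1, ‖f z‖ ≤ M)
    (t₀ : ℂ) (ht₀ : t₀ ∈ Metric.ball (0 : ℂ) 1) :
    DifferentiableOn ℂ (fun z => z * deriv f (t₀ * z)) (Metric.ball (0 : ℂ) 1) ∧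
    (∃ M' : ℝ, ∀ z ∈ Metric.ball (0 : ℂ) 1,
      ‖z * deriv f (t₀ * z)‖ ≤ M') ∧
    ∃ δ > (0 : ℝ), ∃ C > (0 : ℝ), ∀ t ∈ Metric.ball (0 : ℂ) 1,
      ‖t - t₀‖ < δ →
      ∀ z ∈ Metric.ball (0 : ℂ) 1,
        ‖f (t * z) - f (t₀ * z) - (t - t₀) * z * deriv f (t₀ * z)‖ ≤
          C * ‖t - t₀‖ ^ 2 :=
  lemma_3_10_general f hf t₀ ht₀
end

section
/- If n ≥ 1 and f⁰ ∈ B₁ maximizes |c_n| over B₁, i.e., |c_n(f⁰)| = sup_{f∈B₁}|c_n(f)|, then sup_{z∈Δ} |f⁰(z)| = 1. -/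
/-- The class `B₁` of holomorphic maps of `Δ` into the punctured disk `Δ*`. -/
def B1 : Set (ℂ → ℂ) :=
  {f | DifferentiableOn ℂ f (Metric.ball (0 : ℂ) 1) ∧
    ∀ z ∈ Metric.ball (0 : ℂ) 1, f z ≠ 0 ∧ ‖f z‖ < 1}

open Metric

lemma taylorCoeff_const_mul (c : ℂ) (f : ℂ → ℂ) (n : ℕ) :
    taylorCoeff (fun z => c * f z) n = c * taylorCoeff f n := by
  rw [taylorCoeff, taylorCoeff, iteratedDeriv_const_mul_field, mul_div_assoc]

lemma norm_taylorCoeff_le_of_norm_le {f : ℂ → ℂ} {R C r : ℝ}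
    (hf : DifferentiableOn ℂ f (ball 0 R)) (hC : ∀ z ∈ ball 0 R, ‖f z‖ ≤ C)
    (hr : 0 < r) (hrR : r < R) (n : ℕ) :
    ‖taylorCoeff f n‖ ≤ C / r ^ n := by
  have hcl : closedBall (0 : ℂ) r ⊆ ball 0 R := closedBall_subset_ball hrR
  have hcauchy := Complex.norm_iteratedDeriv_le_of_forall_mem_sphere_norm_le n hr
    (DifferentiableOn.diffContOnCl (by rw [closure_ball _ hr.ne']; exact hf.mono hcl))
    fun z hz => hC z (hcl (sphere_subset_closedBall hz))
  have hfac : (0 : ℝ) < n.factorial := mod_cast n.factorial_pos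
  rw [taylorCoeff, norm_div, Complex.norm_natCast, div_le_iff₀ hfac]
  calc ‖iteratedDeriv n f 0‖ ≤ n.factorial * C / r ^ n := hcauchy
    _ = C / r ^ n * n.factorial := by ring

lemma bddAbove_norm_taylorCoeff_B1 (n : ℕ) :
    BddAbove {x : ℝ | ∃ f ∈ B1, x = ‖taylorCoeff f n‖} := by
  refine ⟨1 / (1 / 2) ^ n, ?_⟩
  rintro _ ⟨f, hf, rfl⟩
  exact norm_taylorCoeff_le_of_norm_le hf.1 (fun z hz => (hf.2 z hz).2.le)
    (by norm_num) (by norm_num) n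

lemma exists_mem_B1_taylorCoeff_ne_zero (n : ℕ) : ∃ f ∈ B1, taylorCoeff f n ≠ 0 := by
  refine ⟨fun z => z ^ n / 4 + 1 / 2, ⟨by fun_prop, fun z hz => ?_⟩, ?_⟩
  · have hzn : ‖z ^ n / 4‖ ≤ 1 / 4 := by
      rw [norm_div, norm_pow, Complex.norm_ofNat]
      gcongr
      exact pow_le_one₀ (norm_nonneg z) (mem_ball_zero_iff.mp hz).le
    constructor
    · intro h
      rw [show z ^ n / 4 = -(1 / 2) by linear_combination h] at hzn
      norm_num at hzn
    · calc ‖z ^ n / 4 + 1 / 2‖ ≤ ‖z ^ n / 4‖ + ‖(1 / 2 : ℂ)‖ := norm_add_le _ _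
        _ < 1 := by norm_num at hzn ⊢; linarith
  · rw [taylorCoeff, iteratedDeriv_fun_add (by fun_prop) (by fun_prop), iteratedDeriv_div_const,
      iteratedDeriv_fun_pow_zero, if_pos rfl, iteratedDeriv_const]
    have hfac : (n.factorial : ℂ) ≠ 0 := mod_cast n.factorial_ne_zero
    split_ifs with hn
    · subst hn; norm_num
    · simpa using hfac

lemma inv_mul_mem_B1 {f : ℂ → ℂ} (hf : f ∈ B1) {r : ℝ}
    (hr : ∀ z ∈ ball (0 : ℂ) 1, ‖f z‖ < r) : (fun z => (r : ℂ)⁻¹ * f z) ∈ B1 := by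
  have h0 : (0 : ℂ) ∈ ball (0 : ℂ) 1 := mem_ball_self one_pos
  have hr0 : 0 < r := (norm_pos_iff.mpr (hf.2 0 h0).1).trans (hr 0 h0)
  refine ⟨hf.1.const_mul _, fun z hz => ⟨?_, ?_⟩⟩
  · exact mul_ne_zero (inv_ne_zero (mod_cast hr0.ne')) (hf.2 z hz).1
  · rw [norm_mul, norm_inv, Complex.norm_real, Real.norm_of_nonneg hr0.le, inv_mul_lt_one₀ hr0]
    exact hr z hz

theorem maximizer_has_unit_sup_general (n : ℕ)
    (f0 : ℂ → ℂ) (hf0 : f0 ∈ B1)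
    (hmax : ‖taylorCoeff f0 n‖ =
      sSup {x : ℝ | ∃ f ∈ B1, x = ‖taylorCoeff f n‖}) :
    sSup ((fun z => ‖f0 z‖) '' Metric.ball (0 : ℂ) 1) = 1 := by
  have hle_max : ∀ f ∈ B1, ‖taylorCoeff f n‖ ≤ ‖taylorCoeff f0 n‖ := fun f hf =>
    hmax ▸ le_csSup (bddAbove_norm_taylorCoeff_B1 n) ⟨f, hf, rfl⟩
  have hcoeff : 0 < ‖taylorCoeff f0 n‖ := by
    obtain ⟨f, hf, hne⟩ := exists_mem_B1_taylorCoeff_ne_zero n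
    exact (norm_pos_iff.mpr hne).trans_le (hle_max f hf)
  have hle_one : ∀ x ∈ (fun z => ‖f0 z‖) '' ball (0 : ℂ) 1, x ≤ 1 :=
    Set.forall_mem_image.mpr fun z hz => (hf0.2 z hz).2.le
  refine le_antisymm (csSup_le ((nonempty_ball.mpr one_pos).image _) hle_one) ?_
  by_contra! hlt
  obtain ⟨r, hMr, hr1⟩ := exists_between hlt
  have hr : ∀ z ∈ ball (0 : ℂ) 1, ‖f0 z‖ < r := fun z hz =>
    (le_csSup ⟨1, hle_one⟩ (Set.mem_image_of_mem _ hz)).trans_lt hMr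
  have hr0 : 0 < r := (norm_nonneg _).trans_lt (hr 0 (mem_ball_self one_pos))
  have hgrow : ‖taylorCoeff f0 n‖ < ‖taylorCoeff (fun z => (r : ℂ)⁻¹ * f0 z) n‖ := by
    rw [taylorCoeff_const_mul, norm_mul, norm_inv, Complex.norm_real, Real.norm_of_nonneg hr0.le]
    exact lt_mul_left hcoeff ((one_lt_inv₀ hr0).mpr hr1)
  exact (hgrow.trans_le (hle_max _ (inv_mul_mem_B1 hf0 hr))).false

/-- If `n ≥ 1` and `f0 ∈ B₁` maximizes `|c_n|` over `B₁`, then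
`sup_{z ∈ Δ} |f0(z)| = 1`. -/
theorem maximizer_has_unit_sup (n : ℕ) (hn : 1 ≤ n)
    (f0 : ℂ → ℂ) (hf0 : f0 ∈ B1)
    (hmax : ‖taylorCoeff f0 n‖ =
      sSup {x : ℝ | ∃ f ∈ B1, x = ‖taylorCoeff f n‖}) :
    sSup ((fun z => ‖f0 z‖) '' Metric.ball (0 : ℂ) 1) = 1 :=
  maximizer_has_unit_sup_general n f0 hf0 hmax
end

section
/- For the function κ₀(z) = exp((z − 1)/(z + 1)) = Σ_{n≥0} c_n zⁿ, the strict inequality |c_n(κ₀)| < 2/e holds for every integer n ≥ 2. (In particular, since Σ_{n≥0} |c_n|² = 1, c₀ = 1/e and c₁ = 2/e, one has |c_n|² ≤ 1 − 5/e² for n ≥ 2.) -/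
open Real MeasureTheory Metric

lemma taylorCoeff_eq_cauchyPowerSeries {f : ℂ → ℂ} {r : ℝ} (hr : 0 < r)
    (hf : DifferentiableOn ℂ f (closedBall 0 r)) (k : ℕ) :
    taylorCoeff f k = cauchyPowerSeries f 0 r k (fun _ => 1) := by
  lift r to NNReal using hr.le
  rw [taylorCoeff, iteratedDeriv_eq_iteratedFDeriv,
    ← (hf.hasFPowerSeriesOnBall (mod_cast hr)).factorial_smul, nsmul_eq_mul,
    mul_div_cancel_left₀ _ (mod_cast k.factorial_ne_zero)]

lemma fourierCoeffOn_comp_circleMap {f : ℂ → ℂ} {r : ℝ} (hr : 0 < r)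
    (hf : DifferentiableOn ℂ f (closedBall 0 r)) (k : ℕ) :
    fourierCoeffOn two_pi_pos (fun θ => f (circleMap 0 r θ)) k = r ^ k * taylorCoeff f k := by
  have hr' : (r : ℂ) ≠ 0 := mod_cast hr.ne'
  rw [taylorCoeff_eq_cauchyPowerSeries hr hf, cauchyPowerSeries_apply, circleIntegral,
    fourierCoeffOn_eq_integral, ← intervalIntegral.integral_smul, smul_eq_mul,
    ← intervalIntegral.integral_const_mul, ← intervalIntegral.integral_const_mul]
  refine intervalIntegral.integral_congr fun θ _ => ?_
  simp only [fourier_coe_apply, deriv_circleMap, circleMap_zero, smul_eq_mul, sub_zero,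
    Complex.real_smul]
  have hexp : Complex.exp (θ * Complex.I) ≠ 0 := Complex.exp_ne_zero _
  have hπ : (π : ℂ) ≠ 0 := mod_cast pi_ne_zero
  have hchar : Complex.exp (2 * π * Complex.I * ((-k : ℤ) : ℂ) * θ / (2 * π : ℝ))
      = (Complex.exp (θ * Complex.I))⁻¹ ^ k := by
    rw [← Complex.exp_neg, ← Complex.exp_nat_mul]
    congr 1
    push_cast
    field_simp
  rw [hchar]
  generalize Complex.exp (θ * Complex.I) = w at hexp ⊢
  push_cast
  simp only [one_div, mul_inv, mul_pow, inv_pow]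
  field_simp

theorem sum_norm_taylorCoeff_sq_mul_pow_le {f : ℂ → ℂ} {r M : ℝ} (hr : 0 < r)
    (hf : DifferentiableOn ℂ f (closedBall 0 r)) (hM : ∀ z ∈ sphere (0 : ℂ) r, ‖f z‖ ≤ M)
    (s : Finset ℕ) :
    ∑ k ∈ s, ‖taylorCoeff f k‖ ^ 2 * r ^ (2 * k) ≤ M ^ 2 := by
  set g : ℝ → ℂ := fun θ => f (circleMap 0 r θ)
  have hg_le (θ : ℝ) : ‖g θ‖ ≤ M := hM _ (circleMap_mem_sphere 0 hr.le θ)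
  have hg_cont : Continuous g := hf.continuousOn.comp_continuous (continuous_circleMap 0 r)
    fun θ => sphere_subset_closedBall (circleMap_mem_sphere 0 hr.le θ)
  have parseval := hasSum_sq_fourierCoeffOn two_pi_pos
    (MemLp.of_bound hg_cont.aestronglyMeasurable M (ae_of_all _ hg_le))
  have hint : ∫ θ in 0..2 * π, ‖g θ‖ ^ 2 ≤ ∫ _ in 0..2 * π, M ^ 2 :=
    intervalIntegral.integral_mono_on two_pi_pos.le ((hg_cont.norm.pow 2).intervalIntegrable _ _)
      intervalIntegrable_const fun θ _ =>
        pow_le_pow_left₀ (norm_nonneg _) (hg_le θ) 2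
  calc ∑ k ∈ s, ‖taylorCoeff f k‖ ^ 2 * r ^ (2 * k)
      = ∑ k ∈ s.map Nat.castEmbedding, ‖fourierCoeffOn two_pi_pos g k‖ ^ 2 := by
        rw [Finset.sum_map]
        refine Finset.sum_congr rfl fun k _ => ?_
        rw [Nat.castEmbedding_apply, fourierCoeffOn_comp_circleMap hr hf, norm_mul, norm_pow,
          Complex.norm_real, norm_of_nonneg hr.le]
        ring
    _ ≤ (2 * π - 0)⁻¹ • ∫ θ in 0..2 * π, ‖g θ‖ ^ 2 :=
        sum_le_hasSum _ (fun _ _ => sq_nonneg _) parseval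
    _ ≤ M ^ 2 := by
        rw [smul_eq_mul, sub_zero, inv_mul_le_iff₀ two_pi_pos]
        simpa using hint

lemma differentiableAt_kappa0 {z : ℂ} (hz : z ≠ -1) : DifferentiableAt ℂ kappa0 z :=
  ((differentiableAt_id.sub_const 1).div (differentiableAt_id.add_const 1)
    (by simpa [add_eq_zero_iff_eq_neg] using hz)).cexp

-- At `z = -1` the division by zero gives `kappa0 (-1) = exp 0 = 1`.
lemma norm_kappa0_le_one {z : ℂ} (hz : ‖z‖ ≤ 1) : ‖kappa0 z‖ ≤ 1 := by
  have hre : ((z - 1) / (z + 1)).re = (‖z‖ ^ 2 - 1) / Complex.normSq (z + 1) := by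
    rw [Complex.div_re, ← add_div, Complex.sq_norm]
    congr 1
    simp only [Complex.normSq_apply, Complex.sub_re, Complex.add_re, Complex.sub_im,
      Complex.add_im, Complex.one_re, Complex.one_im]
    ring
  rw [kappa0, Complex.norm_exp, Real.exp_le_one_iff, hre]
  exact div_nonpos_of_nonpos_of_nonneg (by nlinarith [norm_nonneg z]) (Complex.normSq_nonneg _)

lemma norm_taylorCoeff_kappa0_zero : ‖taylorCoeff kappa0 0‖ = (exp 1)⁻¹ := by
  simp [taylorCoeff, kappa0, Complex.norm_exp, Real.exp_neg]

lemma norm_taylorCoeff_kappa0_one : ‖taylorCoeff kappa0 1‖ = 2 / exp 1 := by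
  have h := ((hasDerivAt_id (0 : ℂ)).sub_const 1).fun_div ((hasDerivAt_id (0 : ℂ)).add_const 1)
    (by norm_num)
  norm_num at h
  have hk : HasDerivAt kappa0 (Complex.exp ((0 - 1) / (0 + 1)) * 2) 0 := h.cexp
  rw [taylorCoeff, iteratedDeriv_one, hk.deriv]
  simp [Complex.norm_exp, Real.exp_neg, div_eq_mul_inv, mul_comm]

lemma norm_taylorCoeff_kappa0_sq_sum_le {n : ℕ} (hn : 2 ≤ n) {r : ℝ} (hr0 : 0 < r) (hr1 : r < 1) :
    (exp 1)⁻¹ ^ 2 + (2 / exp 1) ^ 2 * r ^ 2 + ‖taylorCoeff kappa0 n‖ ^ 2 * r ^ (2 * n) ≤ 1 := by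
  have hdiff : DifferentiableOn ℂ kappa0 (closedBall 0 r) := fun z hz =>
    (differentiableAt_kappa0 fun h => by simp [h] at hz; linarith).differentiableWithinAt
  have hbound (z : ℂ) (hz : z ∈ sphere (0 : ℂ) r) : ‖kappa0 z‖ ≤ 1 := by
    rw [mem_sphere_zero_iff_norm] at hz
    exact norm_kappa0_le_one (by linarith)
  have := sum_norm_taylorCoeff_sq_mul_pow_le hr0 hdiff hbound {0, 1, n}
  rwa [Finset.sum_insert (by simp; omega), Finset.sum_pair (by omega),
    norm_taylorCoeff_kappa0_zero, norm_taylorCoeff_kappa0_one, one_pow, mul_zero, pow_zero,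
    mul_one, mul_one, ← add_assoc] at this

lemma seven_div_eight_le_one_sub_pow (n : ℕ) : 7 / 8 ≤ (1 - 1 / (16 * n : ℝ)) ^ (2 * n) := by
  obtain rfl | hn := n.eq_zero_or_pos
  · norm_num
  have hn' : (n : ℝ) ≠ 0 := by positivity
  have hδ : 1 / (16 * n : ℝ) ≤ 2 := by
    rw [div_le_iff₀ (by positivity)]
    linarith [show (1 : ℝ) ≤ n from mod_cast hn]
  have bernoulli := one_add_mul_le_pow (neg_le_neg hδ) (2 * n)
  rw [← sub_eq_add_neg] at bernoulli
  refine le_of_eq_of_le ?_ bernoulli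
  push_cast
  field_simp
  norm_num

/-- For `κ₀(z) = exp((z-1)/(z+1)) = Σ c_n zⁿ`, the strict inequality
`|c_n(κ₀)| < 2/e` holds for every `n ≥ 2`. -/
theorem kappa0_higher_coeffs_lt (n : ℕ) (hn : 2 ≤ n) :
    ‖taylorCoeff kappa0 n‖ < 2 / Real.exp 1 := by
  set r : ℝ := 1 - 1 / (16 * n)
  have hr : 31 / 32 ≤ r := by
    have : 1 / (16 * (n : ℝ)) ≤ 1 / 32 := by
      rw [div_le_div_iff₀ (by positivity) (by norm_num)]
      linarith [show (2 : ℝ) ≤ n from mod_cast hn]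
    linarith
  have hr1 : r < 1 := sub_lt_self _ (by positivity)
  have bessel := norm_taylorCoeff_kappa0_sq_sum_le hn (by linarith) hr1
  have hrn := seven_div_eight_le_one_sub_pow n
  have hx : 1 / 2.72 < (exp 1)⁻¹ := by
    rw [one_div]
    exact inv_strictAnti₀ (exp_pos 1) (exp_one_lt_d9.trans (by norm_num))
  rw [div_eq_mul_inv] at bessel ⊢
  refine lt_of_pow_lt_pow_left₀ 2 (by positivity) ?_
  by_contra! h
  have hr2 : (31 / 32) ^ 2 ≤ r ^ 2 := pow_le_pow_left₀ (by norm_num) hr 2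
  have hx2 : (1 / 2.72) ^ 2 < (exp 1)⁻¹ ^ 2 := pow_lt_pow_left₀ hx (by norm_num) two_ne_zero
  have hc1 := mul_le_mul_of_nonneg_left hr2 (sq_nonneg (2 * (exp 1)⁻¹))
  have hcn := mul_le_mul h hrn (by norm_num) (sq_nonneg _)
  linarith
end

section
/- (Infinitesimal form of the extremality of κ₀.) For every point a ∈ Δ one has (1 − |a|²)·|κ₀′(a)| ≤ 2/e, and the maximum value 2/e is attained (in particular at a = 0, where κ₀′(0) = 2/e). Consequently, for every f ∈ B₁ written as f = κ₀ ∘ f̂ with f̂ : Δ → Δ holomorphic, |c₁(f)| = |κ₀′(f̂(0))|·|f̂′(0)| ≤ (1 − |f̂(0)|²)·|κ₀′(f̂(0))| ≤ 2/e. -/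
/-!
With `t = (1 - |a|²) / |a + 1|²` one has `|κ₀(a)| = e^{-t}` and `κ₀′(a) = 2 κ₀(a) / (a + 1)²`,
so `(1 - |a|²) |κ₀′(a)| = 2 t e^{-t} ≤ 2/e`, with equality at `a = 0` where `t = 1`.
For `f = κ₀ ∘ f̂` the chain rule gives `f′(0) = κ₀′(f̂(0)) f̂′(0)`, and the Schwarz–Pick bound
`|f̂′(0)| ≤ 1 - |f̂(0)|²` (the Schwarz lemma applied to the disk automorphism moving `f̂(0)` to `0`,
composed with `f̂`) reduces this to the first estimate.
-/

open Complex ComplexConjugate Metric Set Topology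

namespace Complex

noncomputable def diskMobius (b w : ℂ) : ℂ :=
  (w - b) / (1 - conj b * w)

variable {b w : ℂ}

theorem one_sub_conj_mul_ne_zero (hb : ‖b‖ < 1) (hw : ‖w‖ < 1) : 1 - conj b * w ≠ 0 := by
  have hlt : ‖conj b * w‖ < 1 := by
    rw [norm_mul, norm_conj]
    nlinarith [norm_nonneg b, norm_nonneg w]
  intro h
  rw [← sub_eq_zero.mp h, norm_one] at hlt
  exact hlt.false

theorem normSq_one_sub_conj_mul_sub_normSq_sub (b w : ℂ) :
    normSq (1 - conj b * w) - normSq (w - b) = (1 - normSq b) * (1 - normSq w) := by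
  simp only [normSq_apply, sub_re, sub_im, one_re, one_im, mul_re, mul_im, conj_re, conj_im]
  ring

theorem diskMobius_self : diskMobius b b = 0 := by
  simp [diskMobius]

theorem norm_diskMobius_lt_one (hb : ‖b‖ < 1) (hw : ‖w‖ < 1) : ‖diskMobius b w‖ < 1 := by
  rw [diskMobius, norm_div, div_lt_one (norm_pos_iff.mpr (one_sub_conj_mul_ne_zero hb hw))]
  refine lt_of_pow_lt_pow_left₀ 2 (norm_nonneg _) ?_
  have hpos : 0 < (1 - normSq b) * (1 - normSq w) := by
    rw [← Complex.sq_norm, ← Complex.sq_norm]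
    exact mul_pos (by nlinarith [norm_nonneg b]) (by nlinarith [norm_nonneg w])
  rw [Complex.sq_norm, Complex.sq_norm]
  linarith [normSq_one_sub_conj_mul_sub_normSq_sub b w]

theorem hasDerivAt_diskMobius (hb : ‖b‖ < 1) (hw : ‖w‖ < 1) :
    HasDerivAt (diskMobius b) ((1 - conj b * b) / (1 - conj b * w) ^ 2) w := by
  have hnum : HasDerivAt (fun z => z - b) 1 w := (hasDerivAt_id w).sub_const b
  have hden : HasDerivAt (fun z => 1 - conj b * z) (-conj b) w := by
    simpa using ((hasDerivAt_id w).const_mul (conj b)).const_sub 1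
  exact (hnum.div hden (one_sub_conj_mul_ne_zero hb hw)).congr_deriv (by ring)

theorem hasDerivAt_diskMobius_self (hb : ‖b‖ < 1) :
    HasDerivAt (diskMobius b) ((1 - ‖b‖ ^ 2 : ℝ) : ℂ)⁻¹ b := by
  have hconj : 1 - conj b * b = ((1 - ‖b‖ ^ 2 : ℝ) : ℂ) := by
    rw [conj_mul']
    push_cast
    rfl
  have hden : ((1 - ‖b‖ ^ 2 : ℝ) : ℂ) ≠ 0 := hconj ▸ one_sub_conj_mul_ne_zero hb hb
  convert hasDerivAt_diskMobius hb hb using 1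
  rw [hconj, pow_two (M := ℂ), div_mul_cancel_left₀ hden]

theorem norm_deriv_le_one_sub_sq_of_mapsTo_ball {g : ℂ → ℂ}
    (hd : DifferentiableOn ℂ g (ball 0 1)) (hmaps : MapsTo g (ball 0 1) (ball 0 1)) :
    ‖deriv g 0‖ ≤ 1 - ‖g 0‖ ^ 2 := by
  set b := g 0
  have h0 : (0 : ℂ) ∈ ball 0 1 := mem_ball_self one_pos
  have hb : ‖b‖ < 1 := mem_ball_zero_iff.mp (hmaps h0)
  have hpos : 0 < 1 - ‖b‖ ^ 2 := by nlinarith [norm_nonneg b]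
  have hdh : DifferentiableOn ℂ (diskMobius b ∘ g) (ball 0 1) := fun z hz =>
    ((hasDerivAt_diskMobius hb (mem_ball_zero_iff.mp (hmaps hz))).differentiableAt.comp z
      (hd.differentiableAt (isOpen_ball.mem_nhds hz))).differentiableWithinAt
  have hmaps' : MapsTo (diskMobius b ∘ g) (ball 0 1) (closedBall (diskMobius b (g 0)) 1) :=
    fun z hz => by
      rw [diskMobius_self, mem_closedBall_zero_iff]
      exact (norm_diskMobius_lt_one hb (mem_ball_zero_iff.mp (hmaps hz))).le
  have hchain : HasDerivAt (diskMobius b ∘ g) (((1 - ‖b‖ ^ 2 : ℝ) : ℂ)⁻¹ * deriv g 0) 0 :=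
    (hasDerivAt_diskMobius_self hb).comp 0
      (hd.differentiableAt (isOpen_ball.mem_nhds h0)).hasDerivAt
  have := norm_deriv_le_one_of_mapsTo_ball hdh hmaps' one_pos
  rwa [hchain.deriv, norm_mul, norm_inv, norm_real, Real.norm_of_nonneg hpos.le,
    inv_mul_le_iff₀ hpos, mul_one] at this

theorem add_one_ne_zero_of_norm_lt_one {a : ℂ} (ha : ‖a‖ < 1) : a + 1 ≠ 0 := by
  intro h
  rw [eq_neg_of_add_eq_zero_left h] at ha
  simp at ha

theorem re_sub_one_div_add_one (a : ℂ) :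
    ((a - 1) / (a + 1)).re = -((1 - ‖a‖ ^ 2) / ‖a + 1‖ ^ 2) := by
  rw [div_re, Complex.sq_norm, Complex.sq_norm, normSq_apply a]
  simp only [sub_re, sub_im, add_re, add_im, one_re, one_im]
  ring

end Complex

theorem norm_kappa0 (a : ℂ) : ‖kappa0 a‖ = Real.exp (-((1 - ‖a‖ ^ 2) / ‖a + 1‖ ^ 2)) := by
  rw [kappa0, norm_exp, re_sub_one_div_add_one]

theorem hasDerivAt_kappa0 {a : ℂ} (ha : a + 1 ≠ 0) :
    HasDerivAt kappa0 (kappa0 a * (2 / (a + 1) ^ 2)) a := by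
  have hfrac : HasDerivAt (fun z : ℂ => (z - 1) / (z + 1)) (2 / (a + 1) ^ 2) a :=
    (((hasDerivAt_id a).sub_const 1).div ((hasDerivAt_id a).add_const 1) ha).congr_deriv
      (by simp only [id]; ring)
  exact hfrac.cexp

theorem deriv_kappa0_zero : deriv kappa0 0 = ((2 / Real.exp 1 : ℝ) : ℂ) := by
  rw [(hasDerivAt_kappa0 (by norm_num)).deriv, kappa0]
  push_cast
  rw [show ((0 : ℂ) - 1) / (0 + 1) = -1 by norm_num, Complex.exp_neg]
  ring

theorem one_sub_sq_mul_norm_deriv_kappa0_le {a : ℂ} (ha : a + 1 ≠ 0) :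
    (1 - ‖a‖ ^ 2) * ‖deriv kappa0 a‖ ≤ 2 / Real.exp 1 := by
  set t := (1 - ‖a‖ ^ 2) / ‖a + 1‖ ^ 2
  have hformula : (1 - ‖a‖ ^ 2) * ‖deriv kappa0 a‖ = 2 * (t * Real.exp (-t)) := by
    rw [(hasDerivAt_kappa0 ha).deriv, norm_mul, norm_kappa0, norm_div, norm_pow, Complex.norm_two]
    ring
  rw [hformula]
  calc 2 * (t * Real.exp (-t)) ≤ 2 * Real.exp (-1) := by
        gcongr; exact Real.mul_exp_neg_le_exp_neg_one t
    _ = 2 / Real.exp 1 := by rw [Real.exp_neg, div_eq_mul_inv]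

/-- Infinitesimal form of the extremality of `κ₀`: for every `a ∈ Δ` one has
`(1-|a|²)|κ₀′(a)| ≤ 2/e`, the maximum `2/e` being attained at `a = 0` where
`κ₀′(0) = 2/e`. Consequently, for every `f ∈ B₁` factored as `f = κ₀ ∘ f̂`
with `f̂ : Δ → Δ` holomorphic, `|c₁(f)| ≤ 2/e`. -/
theorem kappa0_infinitesimal_extremality :
    (∀ a ∈ Metric.ball (0 : ℂ) 1,
      (1 - ‖a‖ ^ 2) * ‖deriv kappa0 a‖ ≤ 2 / Real.exp 1) ∧
    deriv kappa0 0 = ((2 / Real.exp 1 : ℝ) : ℂ) ∧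
    (∀ f fhat : ℂ → ℂ,
      DifferentiableOn ℂ f (Metric.ball (0 : ℂ) 1) →
      (∀ z ∈ Metric.ball (0 : ℂ) 1, f z ≠ 0 ∧ ‖f z‖ < 1) →
      DifferentiableOn ℂ fhat (Metric.ball (0 : ℂ) 1) →
      (∀ z ∈ Metric.ball (0 : ℂ) 1, fhat z ∈ Metric.ball (0 : ℂ) 1) →
      (∀ z ∈ Metric.ball (0 : ℂ) 1, f z = kappa0 (fhat z)) →
      ‖deriv f 0‖ ≤ 2 / Real.exp 1) := by
  refine ⟨fun a ha => one_sub_sq_mul_norm_deriv_kappa0_le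
    (add_one_ne_zero_of_norm_lt_one (mem_ball_zero_iff.mp ha)), deriv_kappa0_zero, ?_⟩
  intro f fhat _ _ hfhat hmaps hfactor
  have h0 : ball (0 : ℂ) 1 ∈ 𝓝 0 := isOpen_ball.mem_nhds (mem_ball_self one_pos)
  have hb : fhat 0 + 1 ≠ 0 :=
    add_one_ne_zero_of_norm_lt_one (mem_ball_zero_iff.mp (hmaps 0 (mem_of_mem_nhds h0)))
  have hchain : deriv f 0 = deriv kappa0 (fhat 0) * deriv fhat 0 := by
    rw [Filter.eventuallyEq_of_mem h0 hfactor |>.deriv_eq]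
    exact deriv_comp (x := 0) (hasDerivAt_kappa0 hb).differentiableAt
      (hfhat.differentiableAt h0)
  calc ‖deriv f 0‖ = ‖deriv kappa0 (fhat 0)‖ * ‖deriv fhat 0‖ := by rw [hchain, norm_mul]
    _ ≤ ‖deriv kappa0 (fhat 0)‖ * (1 - ‖fhat 0‖ ^ 2) := by
      gcongr
      exact norm_deriv_le_one_sub_sq_of_mapsTo_ball hfhat hmaps
    _ ≤ 2 / Real.exp 1 := by rw [mul_comm]; exact one_sub_sq_mul_norm_deriv_kappa0_le hb
end
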